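/- arXiv:math/0505639 — 4 statements merged into one kernel-verified Lean document; each statement's English description precedes it below -/
import Mathlib

section
/- (Key step (9.12) in the proof of Theorem 3.1, type 1 tails) Under the two-distribution tail-equivalence setup with type 1 tails, for every m ∈ (0,1) ∪ (1,∞): (F₂⁻¹(τ) − F₁⁻¹(τ)) / (F₁⁻¹(mτ) − F₁⁻¹(τ)) → −(log K)/(log m) as τ ↘ 0, and F₁⁻¹(mτ) − F₁⁻¹(τ) ≠ 0 for all sufficiently small τ > 0. -/
/-!
Write `Q = F₁⁻¹`. A type 1 tail makes the quantile transform rigid: `τ / F₁ (Q τ) → 1`, and if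
`G / F₁ → L` then `G (Q τ + v · a (Q τ)) / τ → L eᵛ` for every `v`. As `G` is monotone, `G⁻¹ τ`
is then trapped between `Q τ + v · a (Q τ)` for `v` slightly below and slightly above `-log L`,
so `(G⁻¹ τ - Q τ) / a (Q τ) → -log L`. Take `G = F₂` (`L = K`) and `G = F₁ / m`, whose quantile
is `τ ↦ Q (m τ)` (`L = 1 / m`), and divide; the second limit `log m ≠ 0` also keeps the
denominator away from `0`.
-/

open MeasureTheory Filter Topology Real Set

/-- `sInf` returns the junk value `0` when the set is empty or unbounded below, hence the
`Nonempty` / `BddBelow` hypotheses of the lemmas below. -/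
noncomputable def quantile (F : ℝ → ℝ) (τ : ℝ) : ℝ := sInf {z | τ < F z}

section Quantile

variable {F : ℝ → ℝ} {τ z : ℝ}

lemma quantile_le (hbdd : BddBelow {y | τ < F y}) (h : τ < F z) : quantile F τ ≤ z :=
  csInf_le hbdd h

lemma apply_le_of_lt_quantile (hbdd : BddBelow {y | τ < F y}) (h : z < quantile F τ) :
    F z ≤ τ :=
  le_of_not_gt fun h' => (quantile_le hbdd h').not_gt h

lemma le_quantile (hF : Monotone F) (hne : {y | τ < F y}.Nonempty) (h : F z ≤ τ) :
    z ≤ quantile F τ :=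
  le_csInf hne fun _ hy => (hF.reflect_lt (h.trans_lt hy)).le

lemma lt_apply_of_quantile_lt (hF : Monotone F) (hne : {y | τ < F y}.Nonempty)
    (h : quantile F τ < z) : τ < F z :=
  lt_of_not_ge fun h' => (le_quantile hF hne h').not_gt h

lemma bddBelow_setOf_lt (hF : Monotone F) (h : F z ≤ τ) : BddBelow {y | τ < F y} :=
  ⟨z, fun _ hy => (hF.reflect_lt (h.trans_lt hy)).le⟩

lemma quantile_div_const {m : ℝ} (hm : 0 < m) (τ : ℝ) :
    quantile (fun z => F z / m) τ = quantile F (m * τ) := by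
  simp only [quantile, lt_div_iff₀ hm, mul_comm τ]

lemma bddBelow_setOf_lt_of_tendsto {l : Filter ℝ} [l.NeBot] (hF : Monotone F)
    (hFl : Tendsto F l (𝓝 0)) (hτ : 0 < τ) : BddBelow {y | τ < F y} :=
  let ⟨_, hz⟩ := (hFl.eventually_lt_const hτ).exists
  bddBelow_setOf_lt hF hz.le

lemma eventually_nonempty_setOf_lt (hz : 0 < F z) : ∀ᶠ τ in 𝓝[>] 0, {y | τ < F y}.Nonempty :=
  eventually_nhdsWithin_of_eventually_nhds (eventually_lt_nhds hz) |>.mono fun _ hτ => ⟨z, hτ⟩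

lemma eventually_quantile_le {l : Filter ℝ} [l.NeBot] (hF : Monotone F)
    (hFl : Tendsto F l (𝓝 0)) (hz : 0 < F z) : ∀ᶠ τ in 𝓝[>] 0, quantile F τ ≤ z := by
  filter_upwards [Ioo_mem_nhdsGT hz] with τ hτ
  exact quantile_le (bddBelow_setOf_lt_of_tendsto hF hFl hτ.1) hτ.2

lemma tendsto_quantile_sub_div_of_eventually {G q b : ℝ → ℝ} {l : Filter ℝ} {c : ℝ}
    (hG : Monotone G) (hb : ∀ᶠ τ in l, 0 < b τ) (hbdd : ∀ᶠ τ in l, BddBelow {z | τ < G z})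
    (hup : ∀ v > c, ∀ᶠ τ in l, τ < G (q τ + v * b τ))
    (hlow : ∀ v < c, ∀ᶠ τ in l, G (q τ + v * b τ) ≤ τ) :
    Tendsto (fun τ => (quantile G τ - q τ) / b τ) l (𝓝 c) := by
  refine tendsto_order.2 ⟨fun c' hc' => ?_, fun c' hc' => ?_⟩
  · filter_upwards [hb, hup (c + 1) (by linarith), hlow ((c' + c) / 2) (by linarith)]
      with τ hbτ hne hle
    have := le_quantile hG ⟨_, hne⟩ hle
    rw [lt_div_iff₀ hbτ]
    nlinarith
  · filter_upwards [hb, hbdd, hup ((c + c') / 2) (by linarith)] with τ hbτ hbddτ hlt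
    have := quantile_le hbddτ hlt
    rw [div_lt_iff₀ hbτ]
    nlinarith

end Quantile

lemma tendsto_one_of_exp_bounds {α : Type*} {f : α → ℝ} {l : Filter α}
    (h : ∀ δ > 0, ∀ᶠ x in l, exp (-δ) < f x ∧ f x < exp δ) : Tendsto f l (𝓝 1) := by
  refine tendsto_order.2 ⟨fun b hb => ?_, fun b hb => ?_⟩
  · rcases le_or_gt b 0 with hb0 | hb0
    · filter_upwards [h 1 one_pos] with x hx using hb0.trans_lt ((exp_pos _).trans hx.1)
    · filter_upwards [h (-log b) (neg_pos.2 (log_neg hb0 hb))] with x hx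
      simpa only [neg_neg, exp_log hb0] using hx.1
  · filter_upwards [h (log b) (log_pos hb)] with x hx
    simpa only [exp_log (zero_lt_one.trans hb)] using hx.2

lemma eventually_lt_of_tendsto_apply {α : Type*} {F : ℝ → ℝ} {g : α → ℝ} {l : Filter α} {b : ℝ}
    (hF : Monotone F) (hg : Tendsto (fun x => F (g x)) l (𝓝 0)) (hb : 0 < F b) :
    ∀ᶠ x in l, g x < b :=
  (hg.eventually_lt_const hb).mono fun _ hx => hF.reflect_lt hx

lemma setIntegral_pos_of_forall_pos {X : Type*} [MeasurableSpace X] {μ : Measure X} {f : X → ℝ}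
    {s : Set X} (hs : MeasurableSet s) (hμs : 0 < μ s) (hf : ∀ x ∈ s, 0 < f x)
    (hint : IntegrableOn f s μ) : 0 < ∫ x in s, f x ∂μ := by
  rw [setIntegral_pos_iff_support_of_nonneg_ae
    (ae_restrict_of_forall_mem hs fun x hx => (hf x hx).le) hint]
  exact hμs.trans_le (measure_mono fun x hx => ⟨(hf x hx).ne', hx⟩)

lemma tendsto_zero_of_tendsto_div {α : Type*} {f g : α → ℝ} {l : Filter α} {c : ℝ}
    (hg : Tendsto g l (𝓝 0)) (hne : ∀ᶠ x in l, g x ≠ 0)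
    (h : Tendsto (fun x => f x / g x) l (𝓝 c)) : Tendsto f l (𝓝 0) := by
  simpa using (h.mul hg).congr' (hne.mono fun x hx => div_mul_cancel₀ _ hx)

lemma eventually_pos_of_tendsto_div {α : Type*} {f g : α → ℝ} {l : Filter α} {c : ℝ}
    (hg : ∀ᶠ x in l, 0 < g x) (hc : 0 < c) (h : Tendsto (fun x => f x / g x) l (𝓝 c)) :
    ∀ᶠ x in l, 0 < f x := by
  filter_upwards [hg, h.eventually_const_lt hc] with x hgx hx
  exact (div_pos_iff_of_pos_right hgx).1 hx

lemma tendsto_atBot_zero_of_integrableOn_Iic {F : ℝ → ℝ} (hF : Monotone F)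
    (hpos : ∀ z, 0 ≤ F z) (hint : IntegrableOn F (Iic 0)) : Tendsto F atBot (𝓝 0) := by
  have hbdd : BddBelow (range F) := ⟨0, forall_mem_range.2 hpos⟩
  convert tendsto_atBot_ciInf hF hbdd
  refine le_antisymm (le_ciInf hpos) (not_lt.1 fun hc => ?_)
  have hconst : IntegrableOn (fun _ => ⨅ z, F z) (Iic (0 : ℝ)) :=
    Integrable.mono hint aestronglyMeasurable_const <| ae_of_all _ fun z => by
      rw [norm_of_nonneg hc.le, norm_of_nonneg (hpos z)]
      exact ciInf_le hbdd z
  simp [integrableOn_const_iff, hc.ne'] at hconst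

/-- With `0 ≤ a z ≤ z`, a positive right limit `F (0+)` would force
`F (z + a z) / F z → 1 ≠ exp 1`. -/
lemma tendsto_nhdsGT_zero_of_tail {F a : ℝ → ℝ} (hF : Monotone F) (hpos : ∀ z > 0, 0 < F z)
    (ha : ∀ z > 0, 0 ≤ a z ∧ a z ≤ z)
    (htail : Tendsto (fun z => F (z + a z) / F z) (𝓝[>] 0) (𝓝 (exp 1))) :
    Tendsto F (𝓝[>] 0) (𝓝 0) := by
  have hc := hF.tendsto_nhdsGT 0
  suffices sInf (F '' Ioi 0) = 0 by rwa [this] at hc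
  by_contra hc0
  have hdouble : Tendsto (fun z : ℝ => 2 * z) (𝓝[>] 0) (𝓝[>] 0) := by
    refine tendsto_nhdsWithin_of_tendsto_nhds_of_eventually_within _ ?_ ?_
    · simpa using ((continuous_const_mul (2 : ℝ)).tendsto 0).mono_left nhdsWithin_le_nhds
    · filter_upwards [self_mem_nhdsWithin] with z hz using mul_pos two_pos (mem_Ioi.1 hz)
  have hone : Tendsto (fun z => F (z + a z) / F z) (𝓝[>] 0) (𝓝 1) := by
    refine tendsto_of_tendsto_of_tendsto_of_le_of_le' tendsto_const_nhds
      (by simpa [div_self hc0] using (hc.comp hdouble).div hc hc0) ?_ ?_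
    · filter_upwards [self_mem_nhdsWithin] with z hz
      rw [one_le_div (hpos z hz)]
      exact hF (by linarith [(ha z hz).1])
    · filter_upwards [self_mem_nhdsWithin] with z hz
      exact div_le_div_of_nonneg_right (hF (by linarith [(ha z hz).2])) (hpos z hz).le
  exact one_ne_zero ((exp_eq_one_iff 1).1 (tendsto_nhds_unique htail hone))

/-- The consequences of a type 1 tail at the lower endpoint, with auxiliary function `a`, that
the quantile asymptotics rely on; both endpoint cases `0` and `-∞` provide them. -/
structure TypeOneLowerTail (F a : ℝ → ℝ) (l : Filter ℝ) : Prop where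
  monotone : Monotone F
  tendsto_zero : Tendsto F l (𝓝 0)
  eventually_pos : ∀ᶠ z in l, 0 < F z
  eventually_scale_pos : ∀ᶠ z in l, 0 < a z
  tendsto_quantile : Tendsto (quantile F) (𝓝[>] 0) l
  tendsto_shift : ∀ v : ℝ, Tendsto (fun z => z + v * a z) l l
  tendsto_tail : ∀ v : ℝ, Tendsto (fun z => F (z + v * a z) / F z) l (𝓝 (exp v))

namespace TypeOneLowerTail

variable {F a : ℝ → ℝ} {l : Filter ℝ}

lemma of_atBot (hF : Monotone F) (hpos : ∀ z, 0 < F z) (hint : ∀ z, IntegrableOn F (Iic z))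
    (ha : ∀ z, a z = (∫ v in Iic z, F v) / F z)
    (htail : ∀ v : ℝ, Tendsto (fun z => F (z + v * a z) / F z) atBot (𝓝 (exp v))) :
    TypeOneLowerTail F a atBot := by
  have hFl := tendsto_atBot_zero_of_integrableOn_Iic hF (fun z => (hpos z).le) (hint 0)
  have hpos' : ∀ᶠ z in atBot, 0 < F z := Eventually.of_forall hpos
  refine ⟨hF, hFl, hpos', Eventually.of_forall fun z => ?_, ?_, fun v => ?_, htail⟩
  · rw [ha z]
    exact div_pos (setIntegral_pos_of_forall_pos measurableSet_Iic (by simp [Real.volume_Iic])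
      (fun x _ => hpos x) (hint z)) (hpos z)
  · exact tendsto_atBot.2 fun b => eventually_quantile_le hF hFl (hpos b)
  · have hw := tendsto_zero_of_tendsto_div hFl (hpos'.mono fun _ h => h.ne') (htail v)
    exact tendsto_atBot.2 fun b => (eventually_lt_of_tendsto_apply hF hw (hpos b)).mono
      fun _ => le_of_lt

lemma of_nhdsGT (hF : Monotone F) (hpos : ∀ z > 0, 0 < F z)
    (hint : ∀ z > 0, IntegrableOn F (Ioc 0 z)) (ha : ∀ z > 0, a z = (∫ v in Ioc 0 z, F v) / F z)
    (htail : ∀ v : ℝ, Tendsto (fun z => F (z + v * a z) / F z) (𝓝[>] 0) (𝓝 (exp v))) :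
    TypeOneLowerTail F a (𝓝[>] 0) := by
  have ha_pos : ∀ z > 0, 0 < a z := fun z hz => by
    rw [ha z hz]
    exact div_pos (setIntegral_pos_of_forall_pos measurableSet_Ioc (by simp [hz])
      (fun x hx => hpos x hx.1) (hint z hz)) (hpos z hz)
  have ha_le : ∀ z > 0, a z ≤ z := fun z hz => by
    rw [ha z hz, div_le_iff₀ (hpos z hz)]
    calc ∫ v in Ioc 0 z, F v ≤ ∫ _ in Ioc 0 z, F z :=
          setIntegral_mono_on (hint z hz) (integrableOn_const (by simp)) measurableSet_Ioc
            fun x hx => hF hx.2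
      _ = z * F z := by simp [hz.le]
  have hFl := tendsto_nhdsGT_zero_of_tail hF hpos (fun z hz => ⟨(ha_pos z hz).le, ha_le z hz⟩)
    (by simpa using htail 1)
  have hpos' : ∀ᶠ z in 𝓝[>] 0, 0 < F z := eventually_nhdsWithin_of_forall hpos
  have hnonpos : ∀ z ≤ 0, F z ≤ 0 := fun z hz =>
    ge_of_tendsto hFl (eventually_nhdsWithin_of_forall fun y hy => hF (hz.trans (mem_Ioi.1 hy).le))
  have hto : ∀ {g : ℝ → ℝ}, (∀ b > 0, ∀ᶠ x in 𝓝[>] 0, g x ∈ Ioo 0 b) →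
      Tendsto g (𝓝[>] 0) (𝓝[>] 0) := (nhdsGT_basis 0).tendsto_right_iff.2
  refine ⟨hF, hFl, hpos', eventually_nhdsWithin_of_forall ha_pos, hto fun b hb => ?_,
    fun v => hto fun b hb => ?_, htail⟩
  · filter_upwards [self_mem_nhdsWithin, eventually_nonempty_setOf_lt (hpos b hb),
      eventually_quantile_le hF hFl (hpos (b / 2) (by linarith))] with τ hτ hne hle
    obtain ⟨z, hz0, hz⟩ := (eventually_mem_nhdsWithin.and (hFl.eventually_lt_const hτ)).exists
    exact ⟨lt_of_lt_of_le hz0 (le_quantile hF hne hz.le), by linarith⟩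
  · have hw := tendsto_zero_of_tendsto_div hFl (hpos'.mono fun _ h => h.ne') (htail v)
    filter_upwards [eventually_pos_of_tendsto_div hpos' (exp_pos v) (htail v),
      eventually_lt_of_tendsto_apply hF hw (hpos b hb)] with z h0 hzb
    exact ⟨lt_of_not_ge fun h => (hnonpos _ h).not_gt h0, hzb⟩

lemma neBot (h : TypeOneLowerTail F a l) : l.NeBot := h.tendsto_quantile.neBot

/-- With `Q = quantile F τ`: `F (Q - (δ/2) a Q) ≤ τ < F (Q + (δ/2) a Q)`, and both bounds divided
by `F Q` tend to `exp (∓ δ/2)`. -/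
lemma tendsto_div_apply_quantile (h : TypeOneLowerTail F a l) :
    Tendsto (fun τ => τ / F (quantile F τ)) (𝓝[>] 0) (𝓝 1) := by
  have := h.neBot
  have hratio : ∀ v, Tendsto (fun τ => F (quantile F τ + v * a (quantile F τ)) / F (quantile F τ))
      (𝓝[>] 0) (𝓝 (exp v)) := fun v => (h.tendsto_tail v).comp h.tendsto_quantile
  obtain ⟨b, hb⟩ := h.eventually_pos.exists
  refine tendsto_one_of_exp_bounds fun δ hδ => ?_
  filter_upwards [self_mem_nhdsWithin, eventually_nonempty_setOf_lt hb,
    h.tendsto_quantile.eventually h.eventually_pos,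
    h.tendsto_quantile.eventually h.eventually_scale_pos,
    (hratio (-(δ / 2))).eventually_const_lt (exp_lt_exp.2 (by linarith) : exp (-δ) < _),
    (hratio (δ / 2)).eventually_lt_const (exp_lt_exp.2 (by linarith) : _ < exp δ)]
    with τ hτ hne hFQ haQ hlow hup
  have hbdd := bddBelow_setOf_lt_of_tendsto h.monotone h.tendsto_zero hτ
  have hleft : F (quantile F τ + -(δ / 2) * a (quantile F τ)) ≤ τ :=
    apply_le_of_lt_quantile hbdd (by nlinarith)
  have hright : τ < F (quantile F τ + δ / 2 * a (quantile F τ)) :=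
    lt_apply_of_quantile_lt h.monotone hne (by nlinarith)
  exact ⟨hlow.trans_le (div_le_div_of_nonneg_right hleft hFQ.le),
    (div_lt_div_of_pos_right hright hFQ).trans hup⟩

lemma tendsto_apply_shift_quantile_div (h : TypeOneLowerTail F a l) {G : ℝ → ℝ} {L : ℝ}
    (hG : Tendsto (fun z => G z / F z) l (𝓝 L)) (v : ℝ) :
    Tendsto (fun τ => G (quantile F τ + v * a (quantile F τ)) / τ) (𝓝[>] 0)
      (𝓝 (L * exp v)) := by
  have hw := (h.tendsto_shift v).comp h.tendsto_quantile
  have hlim := ((hG.comp hw).mul ((h.tendsto_tail v).comp h.tendsto_quantile)).div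
    h.tendsto_div_apply_quantile one_ne_zero
  rw [div_one] at hlim
  refine hlim.congr' ?_
  filter_upwards [self_mem_nhdsWithin, h.tendsto_quantile.eventually h.eventually_pos,
    hw.eventually h.eventually_pos] with τ hτ hFQ hFw
  simp only [Function.comp_apply, Pi.div_apply] at hFw ⊢
  field_simp [(mem_Ioi.1 hτ).ne', hFQ.ne', hFw.ne']

lemma tendsto_quantile_sub_div (h : TypeOneLowerTail F a l) {G : ℝ → ℝ} {L : ℝ}
    (hGm : Monotone G) (hG : Tendsto (fun z => G z / F z) l (𝓝 L)) (hL : 0 < L) :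
    Tendsto (fun τ => (quantile G τ - quantile F τ) / a (quantile F τ)) (𝓝[>] 0)
      (𝓝 (-log L)) := by
  have := h.neBot
  have hGl : Tendsto G l (𝓝 0) :=
    tendsto_zero_of_tendsto_div h.tendsto_zero (h.eventually_pos.mono fun _ h => h.ne') hG
  have hexp : ∀ v, L * exp v = exp (v - -log L) := fun v => by
    rw [sub_neg_eq_add, exp_add, exp_log hL, mul_comm]
  refine tendsto_quantile_sub_div_of_eventually hGm
    (h.tendsto_quantile.eventually h.eventually_scale_pos) ?_ (fun v hv => ?_) (fun v hv => ?_)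
  · filter_upwards [self_mem_nhdsWithin] with τ hτ using bddBelow_setOf_lt_of_tendsto hGm hGl hτ
  · have h1 : 1 < L * exp v := by rw [hexp]; exact one_lt_exp_iff.2 (sub_pos.2 hv)
    filter_upwards [self_mem_nhdsWithin,
      (h.tendsto_apply_shift_quantile_div hG v).eventually_const_lt h1] with τ hτ hlt
    exact (one_lt_div hτ).1 hlt
  · have h1 : L * exp v < 1 := by rw [hexp]; exact exp_lt_one_iff.2 (sub_neg.2 hv)
    filter_upwards [self_mem_nhdsWithin,
      (h.tendsto_apply_shift_quantile_div hG v).eventually_lt_const h1] with τ hτ hlt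
    exact ((div_lt_one hτ).1 hlt).le

lemma tendsto_quantile_sub_div_quantile_sub (h : TypeOneLowerTail F a l) {G : ℝ → ℝ} {K m : ℝ}
    (hGm : Monotone G) (hG : Tendsto (fun z => G z / F z) l (𝓝 K)) (hK : 0 < K) (hm : 0 < m)
    (hm1 : m ≠ 1) :
    Tendsto (fun τ => (quantile G τ - quantile F τ) / (quantile F (m * τ) - quantile F τ))
      (𝓝[>] 0) (𝓝 (-log K / log m)) ∧
    ∀ᶠ τ in 𝓝[>] 0, quantile F (m * τ) - quantile F τ ≠ 0 := by
  have hlogm : log m ≠ 0 := log_ne_zero_of_pos_of_ne_one hm hm1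
  have hden : Tendsto (fun τ => (quantile F (m * τ) - quantile F τ) / a (quantile F τ))
      (𝓝[>] 0) (𝓝 (log m)) := by
    have hFm : Tendsto (fun z => F z / m / F z) l (𝓝 m⁻¹) :=
      tendsto_const_nhds.congr' (h.eventually_pos.mono fun z hz => by field_simp)
    simpa only [quantile_div_const hm, log_inv, neg_neg] using
      h.tendsto_quantile_sub_div (h.monotone.div_const hm.le) hFm (inv_pos.2 hm)
  refine ⟨((h.tendsto_quantile_sub_div hGm hG hK).div hden hlogm).congr' ?_,
    (hden.eventually_ne hlogm).mono fun τ hτ h0 => hτ (by rw [h0, zero_div])⟩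
  filter_upwards [h.tendsto_quantile.eventually h.eventually_scale_pos] with τ hτ
  exact div_div_div_cancel_right₀ hτ.ne' _ _

end TypeOneLowerTail

theorem extremal_qr_step912_type1_general
    (F₁ F₂ : ℝ → ℝ)
    (h₁mono : Monotone F₁) (h₂mono : Monotone F₂)
    (a : ℝ → ℝ) (lfil : Filter ℝ)
    (hcase :
      (lfil = 𝓝[>] (0:ℝ) ∧
        (∀ z < (0:ℝ), F₁ z = 0) ∧ (∀ z > (0:ℝ), 0 < F₁ z) ∧
        (∀ z < (0:ℝ), F₂ z = 0) ∧ (∀ z > (0:ℝ), 0 < F₂ z) ∧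
        (∀ z > (0:ℝ), IntegrableOn F₁ (Set.Ioc 0 z)) ∧
        (∀ z > (0:ℝ), a z = (∫ v in Set.Ioc (0:ℝ) z, F₁ v) / F₁ z)) ∨
      (lfil = atBot ∧ (∀ z : ℝ, 0 < F₁ z) ∧ (∀ z : ℝ, 0 < F₂ z) ∧
        (∀ z : ℝ, IntegrableOn F₁ (Set.Iic z)) ∧
        (∀ z : ℝ, a z = (∫ v in Set.Iic z, F₁ v) / F₁ z)))
    (htail1 : ∀ v : ℝ, Tendsto (fun z => F₁ (z + v * a z) / F₁ z) lfil (𝓝 (Real.exp v)))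
    (K : ℝ) (hK : 0 < K)
    (heq : Tendsto (fun z => F₂ z / F₁ z) lfil (𝓝 K))
    (m : ℝ) (hm : m ∈ Set.Ioo (0:ℝ) 1 ∪ Set.Ioi 1)
    :
    Tendsto (fun τ => (sInf {z | τ < F₂ z} - sInf {z | τ < F₁ z}) /
        (sInf {z | m * τ < F₁ z} - sInf {z | τ < F₁ z})) (𝓝[>] (0:ℝ))
      (𝓝 (-(Real.log K) / Real.log m)) ∧
    ∀ᶠ τ in 𝓝[>] (0:ℝ), sInf {z | m * τ < F₁ z} - sInf {z | τ < F₁ z} ≠ 0 := by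
  have hm0 : 0 < m := by rcases hm with h | h; exacts [h.1, one_pos.trans h]
  have hm1 : m ≠ 1 := by rcases hm with h | h; exacts [h.2.ne, h.ne']
  have h : TypeOneLowerTail F₁ a lfil := by
    rcases hcase with ⟨rfl, -, hpos, -, -, hint, ha⟩ | ⟨rfl, hpos, -, hint, ha⟩
    · exact .of_nhdsGT h₁mono hpos hint ha htail1
    · exact .of_atBot h₁mono hpos hint ha htail1
  exact h.tendsto_quantile_sub_div_quantile_sub h₂mono heq hK hm0 hm1

theorem extremal_qr_step912_type1
    (F₁ F₂ : ℝ → ℝ)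
    (h₁mono : Monotone F₁) (h₂mono : Monotone F₂)
    (h₁rc : ∀ z : ℝ, ContinuousWithinAt F₁ (Set.Ici z) z)
    (h₂rc : ∀ z : ℝ, ContinuousWithinAt F₂ (Set.Ici z) z)
    (h₁range : ∀ z : ℝ, F₁ z ∈ Set.Icc (0:ℝ) 1)
    (h₂range : ∀ z : ℝ, F₂ z ∈ Set.Icc (0:ℝ) 1)
    (a : ℝ → ℝ) (lfil : Filter ℝ)
    (hcase :
      (lfil = 𝓝[>] (0:ℝ) ∧
        (∀ z < (0:ℝ), F₁ z = 0) ∧ (∀ z > (0:ℝ), 0 < F₁ z) ∧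
        (∀ z < (0:ℝ), F₂ z = 0) ∧ (∀ z > (0:ℝ), 0 < F₂ z) ∧
        (∀ z > (0:ℝ), IntegrableOn F₁ (Set.Ioc 0 z)) ∧
        (∀ z > (0:ℝ), a z = (∫ v in Set.Ioc (0:ℝ) z, F₁ v) / F₁ z)) ∨
      (lfil = atBot ∧ (∀ z : ℝ, 0 < F₁ z) ∧ (∀ z : ℝ, 0 < F₂ z) ∧
        (∀ z : ℝ, IntegrableOn F₁ (Set.Iic z)) ∧
        (∀ z : ℝ, a z = (∫ v in Set.Iic z, F₁ v) / F₁ z)))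
    (htail1 : ∀ v : ℝ, Tendsto (fun z => F₁ (z + v * a z) / F₁ z) lfil (𝓝 (Real.exp v)))
    (K : ℝ) (hK : 0 < K)
    (heq : Tendsto (fun z => F₂ z / F₁ z) lfil (𝓝 K))
    (m : ℝ) (hm : m ∈ Set.Ioo (0:ℝ) 1 ∪ Set.Ioi 1)
    :
    Tendsto (fun τ => (sInf {z | τ < F₂ z} - sInf {z | τ < F₁ z}) /
        (sInf {z | m * τ < F₁ z} - sInf {z | τ < F₁ z})) (𝓝[>] (0:ℝ))
      (𝓝 (-(Real.log K) / Real.log m)) ∧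
    ∀ᶠ τ in 𝓝[>] (0:ℝ), sInf {z | m * τ < F₁ z} - sInf {z | τ < F₁ z} ≠ 0 :=
  extremal_qr_step912_type1_general F₁ F₂ h₁mono h₂mono a lfil hcase htail1 K hK heq m hm
end

section
/- (Lemma 9.2(ii), type 3 tails) Under the two-distribution tail-equivalence setup with ξ < 0, for every m ∈ (0,1) ∪ (1,∞): (F₂⁻¹(mτ) − F₂⁻¹(τ)) / (F₁⁻¹(mτ/K) − F₁⁻¹(τ/K)) → 1 as τ ↘ 0, and F₁⁻¹(mτ/K) − F₁⁻¹(τ/K) ≠ 0 for all sufficiently small τ > 0. -/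
/-!
Write `Qᵢ` for the generalized inverse of `Fᵢ` and `α = -1/ξ > 0`. Since
`F₁ (Q₁ τ) ≥ τ ≥ F₁ z` for `z < Q₁ τ`, the factorization
`F₂ (b z) = F₂ (b z) / F₁ (b z) · F₁ (b z) / F₁ z · F₁ z ≈ K b^α F₁ z`
squeezes `Q₂ (c τ)` between multiples of `Q₁ τ`, so that `Q₂ (c τ) / Q₁ τ → L` whenever
`K L^α = c`. Thus `Q₂ τ ~ Q₁ (τ / K)`, `Q₂ (m τ) ~ Q₁ (m τ / K)` and
`Q₁ (m τ / K) / Q₁ (τ / K) → m^(1/α) ≠ 1`; dividing numerator and denominator of the quotient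
of differences by `Q₁ (τ / K)` gives the limit `1`.
-/

open Filter Topology Set

lemma tendsto_mul_left_nhdsGT_zero {c : ℝ} (hc : 0 < c) :
    Tendsto (c * ·) (𝓝[>] 0) (𝓝[>] 0) :=
  tendsto_iff_comap.2 (comap_mulLeft_nhdsGT_zero hc).ge

lemma tendsto_div_const_nhdsGT_zero {c : ℝ} (hc : 0 < c) :
    Tendsto (· / c) (𝓝[>] 0) (𝓝[>] 0) := by
  simpa only [div_eq_inv_mul] using tendsto_mul_left_nhdsGT_zero (inv_pos.2 hc)

lemma eventually_nhdsGT_zero_exists_lt_apply {F : ℝ → ℝ} (hpos : ∀ z > 0, 0 < F z) :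
    ∀ᶠ τ in 𝓝[>] 0, ∃ z, τ < F z :=
  nhdsWithin_le_nhds ((eventually_lt_nhds (hpos 1 one_pos)).mono fun _ hτ => ⟨1, hτ⟩)

lemma Filter.Tendsto.sub_div_sub {ι : Type*} {l : Filter ι} {f g f' g' : ι → ℝ} {μ : ℝ}
    (hf : Tendsto (fun x => f x / g x) l (𝓝 1)) (hf' : Tendsto (fun x => f' x / g' x) l (𝓝 1))
    (hg : Tendsto (fun x => g' x / g x) l (𝓝 μ)) (hμ : μ ≠ 1)
    (hg0 : ∀ᶠ x in l, g x ≠ 0) (hg'0 : ∀ᶠ x in l, g' x ≠ 0) :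
    Tendsto (fun x => (f' x - f x) / (g' x - g x)) l (𝓝 1) ∧ ∀ᶠ x in l, g' x - g x ≠ 0 := by
  have hμ1 : μ - 1 ≠ 0 := sub_ne_zero.2 hμ
  have hnum : Tendsto (fun x => f' x / g' x * (g' x / g x) - f x / g x) l (𝓝 (1 * μ - 1)) :=
    (hf'.mul hg).sub hf
  have hden : Tendsto (fun x => g' x / g x - 1) l (𝓝 (μ - 1)) := hg.sub_const 1
  have hden0 : ∀ᶠ x in l, g' x - g x ≠ 0 := by
    filter_upwards [hg.eventually_ne hμ, hg0] with x hx hx0 hx'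
    rw [sub_eq_zero.1 hx', div_self hx0] at hx
    exact hx rfl
  refine ⟨?_, hden0⟩
  have hlim := hnum.div hden hμ1
  rw [one_mul, div_self hμ1] at hlim
  refine hlim.congr' ?_
  filter_upwards [hg0, hg'0] with x hx hx'
  rw [Pi.div_apply, div_mul_div_cancel₀ hx', ← sub_div, div_sub_one hx,
    div_div_div_cancel_right₀ hx]

noncomputable def genInv (F : ℝ → ℝ) (τ : ℝ) : ℝ := sInf {z | τ < F z}

section genInv

variable {F : ℝ → ℝ} {τ : ℝ}

lemma bddBelow_setOf_lt_apply (h0 : ∀ z < 0, F z = 0) (hτ : 0 < τ) :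
    BddBelow {z | τ < F z} :=
  ⟨0, fun z (hz : τ < F z) => le_of_not_gt fun hz0 => by rw [h0 z hz0] at hz; linarith⟩

lemma genInv_le (h0 : ∀ z < 0, F z = 0) (hτ : 0 < τ) {s : ℝ} (hs : τ < F s) :
    genInv F τ ≤ s :=
  csInf_le (bddBelow_setOf_lt_apply h0 hτ) hs

lemma le_genInv (hF : Monotone F) (hne : ∃ z, τ < F z) {u : ℝ} (hu : F u ≤ τ) :
    u ≤ genInv F τ :=
  le_csInf hne fun _ hz => le_of_not_gt fun hzu => (lt_of_lt_of_le hz (hF hzu.le)).not_ge hu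

lemma apply_le_of_lt_genInv (h0 : ∀ z < 0, F z = 0) (hτ : 0 < τ) {z : ℝ}
    (hz : z < genInv F τ) : F z ≤ τ :=
  not_lt.1 (notMem_of_lt_csInf (s := {z | τ < F z}) hz (bddBelow_setOf_lt_apply h0 hτ))

lemma le_apply_genInv (hF : Monotone F) (hrc : ∀ z, ContinuousWithinAt F (Ici z) z)
    (hne : ∃ z, τ < F z) : τ ≤ F (genInv F τ) := by
  have hright : ∀ z > genInv F τ, τ ≤ F z := fun z hz => by
    obtain ⟨s, hs, hsz⟩ := exists_lt_of_csInf_lt hne hz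
    exact (lt_of_lt_of_le hs (hF hsz.le)).le
  exact ge_of_tendsto ((hrc _).mono Ioi_subset_Ici_self).tendsto
    (eventually_nhdsWithin_of_forall hright)

lemma genInv_pos (hF : Monotone F) (hrc : ∀ z, ContinuousWithinAt F (Ici z) z) (hF0 : F 0 = 0)
    (hne : ∃ z, τ < F z) (hτ : 0 < τ) : 0 < genInv F τ :=
  lt_of_not_ge fun hQ => by
    have := (le_apply_genInv hF hrc hne).trans (hF hQ)
    linarith

lemma tendsto_genInv_nhdsGT_zero (hF : Monotone F) (hrc : ∀ z, ContinuousWithinAt F (Ici z) z)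
    (h0 : ∀ z < 0, F z = 0) (hF0 : F 0 = 0) (hpos : ∀ z > 0, 0 < F z) :
    Tendsto (genInv F) (𝓝[>] 0) (𝓝[>] 0) := by
  refine (nhdsGT_basis 0).tendsto_right_iff.2 fun ε hε => ?_
  filter_upwards [Ioo_mem_nhdsGT (hpos (ε / 2) (half_pos hε))] with τ hτ
  exact ⟨genInv_pos hF hrc hF0 ⟨_, hτ.2⟩ hτ.1,
    (genInv_le h0 hτ.1 hτ.2).trans_lt (half_lt_self hε)⟩

end genInv

lemma apply_zero_eq_zero_of_tendsto_div {F : ℝ → ℝ} (hrc : ContinuousWithinAt F (Ici 0) 0)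
    {v ℓ : ℝ} (hv : 0 < v) (hℓ : ℓ ≠ 1)
    (hreg : Tendsto (fun z => F (v * z) / F z) (𝓝[>] 0) (𝓝 ℓ)) : F 0 = 0 := by
  by_contra h
  have hF : Tendsto F (𝓝[>] 0) (𝓝 (F 0)) := (hrc.mono Ioi_subset_Ici_self).tendsto
  have hone := (hF.comp (tendsto_mul_left_nhdsGT_zero hv)).div hF h
  rw [div_self h] at hone
  exact hℓ (tendsto_nhds_unique hreg hone)

lemma tendsto_comp_mul_div {F G : ℝ → ℝ} (hpos : ∀ z > 0, 0 < F z) {K v ℓ : ℝ} (hv : 0 < v)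
    (hGF : Tendsto (fun z => G z / F z) (𝓝[>] 0) (𝓝 K))
    (hreg : Tendsto (fun z => F (v * z) / F z) (𝓝[>] 0) (𝓝 ℓ)) :
    Tendsto (fun z => G (v * z) / F z) (𝓝[>] 0) (𝓝 (K * ℓ)) := by
  refine ((hGF.comp (tendsto_mul_left_nhdsGT_zero hv)).mul hreg).congr' ?_
  filter_upwards [self_mem_nhdsWithin] with z (hz : 0 < z)
  exact div_mul_div_cancel₀ (hpos _ (mul_pos hv hz)).ne'

section comparison

variable {F G : ℝ → ℝ}

lemma eventually_genInv_le_mul (hF : Monotone F) (hrc : ∀ z, ContinuousWithinAt F (Ici z) z)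
    (h0 : ∀ z < 0, F z = 0) (hF0 : F 0 = 0) (hpos : ∀ z > 0, 0 < F z)
    (hG0 : ∀ z < 0, G z = 0) {b c ℓ : ℝ} (hc : 0 < c) (hcℓ : c < ℓ)
    (hGF : Tendsto (fun z => G (b * z) / F z) (𝓝[>] 0) (𝓝 ℓ)) :
    ∀ᶠ τ in 𝓝[>] 0, genInv G (c * τ) ≤ b * genInv F τ := by
  have hQ := tendsto_genInv_nhdsGT_zero hF hrc h0 hF0 hpos
  filter_upwards [hQ.eventually (hGF.eventually (eventually_gt_nhds hcℓ)), self_mem_nhdsWithin,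
    eventually_nhdsGT_zero_exists_lt_apply hpos] with τ hratio (hτ : 0 < τ) hne
  have hτQ : τ ≤ F (genInv F τ) := le_apply_genInv hF hrc hne
  refine genInv_le hG0 (mul_pos hc hτ) ?_
  calc c * τ ≤ c * F (genInv F τ) := by gcongr
    _ < G (b * genInv F τ) := (lt_div_iff₀ (hτ.trans_le hτQ)).1 hratio

lemma eventually_mul_le_genInv (hF : Monotone F) (hrc : ∀ z, ContinuousWithinAt F (Ici z) z)
    (h0 : ∀ z < 0, F z = 0) (hF0 : F 0 = 0) (hpos : ∀ z > 0, 0 < F z)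
    (hG : Monotone G) (hGpos : ∀ z > 0, 0 < G z) {a b c ℓ : ℝ} (hc : 0 < c) (ha : 0 < a)
    (hab : a < b) (hℓc : ℓ < c) (hGF : Tendsto (fun z => G (b * z) / F z) (𝓝[>] 0) (𝓝 ℓ)) :
    ∀ᶠ τ in 𝓝[>] 0, a * genInv F τ ≤ genInv G (c * τ) := by
  have hQ := tendsto_genInv_nhdsGT_zero hF hrc h0 hF0 hpos
  have hv : 0 < a / b := div_pos ha (ha.trans hab)
  -- `F (Q τ)` may jump above `τ`, so compare at `(a / b) Q τ < Q τ`, where `F ≤ τ`.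
  have hw := (tendsto_mul_left_nhdsGT_zero hv).comp hQ
  filter_upwards [hw.eventually (hGF.eventually (eventually_lt_nhds hℓc)),
    hQ.eventually self_mem_nhdsWithin, self_mem_nhdsWithin,
    (tendsto_mul_left_nhdsGT_zero hc).eventually (eventually_nhdsGT_zero_exists_lt_apply hGpos)]
    with τ hratio (hQτ : 0 < genInv F τ) (hτ : 0 < τ) hne
  simp only [Function.comp_apply] at hratio
  have hwQ : a / b * genInv F τ < genInv F τ :=
    mul_lt_of_lt_one_left hQτ ((div_lt_one (ha.trans hab)).2 hab)
  have hbw : b * (a / b * genInv F τ) = a * genInv F τ := by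
    field_simp [(ha.trans hab).ne']
  refine le_genInv hG hne ?_
  calc G (a * genInv F τ) = G (b * (a / b * genInv F τ)) := by rw [hbw]
    _ ≤ c * F (a / b * genInv F τ) :=
      ((div_lt_iff₀ (hpos _ (mul_pos hv hQτ))).1 hratio).le
    _ ≤ c * τ := by gcongr; exact apply_le_of_lt_genInv h0 hτ hwQ

theorem tendsto_genInv_div_genInv (hF : Monotone F) (hrc : ∀ z, ContinuousWithinAt F (Ici z) z)
    (h0 : ∀ z < 0, F z = 0) (hF0 : F 0 = 0) (hpos : ∀ z > 0, 0 < F z)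
    (hG : Monotone G) (hG0 : ∀ z < 0, G z = 0) (hGpos : ∀ z > 0, 0 < G z)
    {α K L c : ℝ} (hα : 0 < α) (hK : 0 < K) (hL : 0 < L) (hc : K * L ^ α = c)
    (hreg : ∀ v > 0, Tendsto (fun z => F (v * z) / F z) (𝓝[>] 0) (𝓝 (v ^ α)))
    (hGF : Tendsto (fun z => G z / F z) (𝓝[>] 0) (𝓝 K)) :
    Tendsto (fun τ => genInv G (c * τ) / genInv F τ) (𝓝[>] 0) (𝓝 L) := by
  have hc0 : 0 < c := hc ▸ by positivity
  have hQpos := (tendsto_genInv_nhdsGT_zero hF hrc h0 hF0 hpos).eventually self_mem_nhdsWithin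
  have hlim (b : ℝ) (hb : 0 < b) := tendsto_comp_mul_div hpos hb hGF (hreg b hb)
  refine tendsto_order.2 ⟨fun x hx => ?_, fun y hy => ?_⟩
  · obtain ⟨a, hxa, haL⟩ := exists_between (max_lt hx hL)
    obtain ⟨b, hab, hbL⟩ := exists_between haL
    have ha : 0 < a := (le_max_right _ _).trans_lt hxa
    have hb : 0 < b := ha.trans hab
    have hKb : K * b ^ α < c := hc ▸ by gcongr
    filter_upwards [eventually_mul_le_genInv hF hrc h0 hF0 hpos hG hGpos hc0 ha hab hKb
      (hlim b hb), hQpos] with τ hle (hQ : 0 < genInv F τ)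
    exact ((le_max_left _ _).trans_lt hxa).trans_le ((le_div_iff₀ hQ).2 hle)
  · obtain ⟨b, hLb, hby⟩ := exists_between hy
    have hKb : c < K * b ^ α := hc ▸ by gcongr
    filter_upwards [eventually_genInv_le_mul hF hrc h0 hF0 hpos hG0 hc0 hKb
      (hlim b (hL.trans hLb)), hQpos] with τ hle (hQ : 0 < genInv F τ)
    exact ((div_le_iff₀ hQ).2 hle).trans_lt hby

lemma tendsto_genInv_div_genInv_div_const (hF : Monotone F)
    (hrc : ∀ z, ContinuousWithinAt F (Ici z) z) (h0 : ∀ z < 0, F z = 0) (hF0 : F 0 = 0)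
    (hpos : ∀ z > 0, 0 < F z) (hG : Monotone G) (hG0 : ∀ z < 0, G z = 0)
    (hGpos : ∀ z > 0, 0 < G z) {α K : ℝ} (hα : 0 < α) (hK : 0 < K)
    (hreg : ∀ v > 0, Tendsto (fun z => F (v * z) / F z) (𝓝[>] 0) (𝓝 (v ^ α)))
    (hGF : Tendsto (fun z => G z / F z) (𝓝[>] 0) (𝓝 K)) :
    Tendsto (fun τ => genInv G τ / genInv F (τ / K)) (𝓝[>] 0) (𝓝 1) :=
  ((tendsto_genInv_div_genInv hF hrc h0 hF0 hpos hG hG0 hGpos hα hK one_pos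
    (by rw [Real.one_rpow, mul_one]) hreg hGF).comp (tendsto_div_const_nhdsGT_zero hK)).congr
    fun τ => by simp only [Function.comp_apply, mul_div_cancel₀ τ hK.ne']

lemma tendsto_genInv_mul_div_genInv (hF : Monotone F)
    (hrc : ∀ z, ContinuousWithinAt F (Ici z) z) (h0 : ∀ z < 0, F z = 0) (hF0 : F 0 = 0)
    (hpos : ∀ z > 0, 0 < F z) {α m : ℝ} (hα : 0 < α) (hm : 0 < m)
    (hreg : ∀ v > 0, Tendsto (fun z => F (v * z) / F z) (𝓝[>] 0) (𝓝 (v ^ α))) :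
    Tendsto (fun τ => genInv F (m * τ) / genInv F τ) (𝓝[>] 0) (𝓝 (m ^ α⁻¹)) := by
  have hself : Tendsto (fun z => F z / F z) (𝓝[>] 0) (𝓝 1) :=
    tendsto_const_nhds.congr' <| eventually_nhdsWithin_of_forall fun z hz =>
      (div_self (hpos z hz).ne').symm
  exact tendsto_genInv_div_genInv hF hrc h0 hF0 hpos hF h0 hpos hα one_pos (by positivity)
    (by rw [one_mul, Real.rpow_inv_rpow hm.le hα.ne']) hreg hself

end comparison

theorem extremal_qr_lem92ii_type3_general
    (ξ : ℝ) (hξ : ξ < 0)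
    (F₁ F₂ : ℝ → ℝ)
    (h₁mono : Monotone F₁) (h₂mono : Monotone F₂)
    (h₁rc : ∀ z : ℝ, ContinuousWithinAt F₁ (Set.Ici z) z)
    (h₁0 : ∀ z < (0:ℝ), F₁ z = 0) (h₁pos : ∀ z > (0:ℝ), 0 < F₁ z)
    (h₂0 : ∀ z < (0:ℝ), F₂ z = 0) (h₂pos : ∀ z > (0:ℝ), 0 < F₂ z)
    (hreg : ∀ v > (0:ℝ), Tendsto (fun z => F₁ (v * z) / F₁ z) (𝓝[>] (0:ℝ)) (𝓝 (v ^ (-1/ξ))))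
    (K : ℝ) (hK : 0 < K)
    (heq : Tendsto (fun z => F₂ z / F₁ z) (𝓝[>] (0:ℝ)) (𝓝 K))
    (m : ℝ) (hm : m ∈ Set.Ioo (0:ℝ) 1 ∪ Set.Ioi 1)
    :
    Tendsto (fun τ => (sInf {z | m * τ < F₂ z} - sInf {z | τ < F₂ z}) /
        (sInf {z | m * τ / K < F₁ z} - sInf {z | τ / K < F₁ z})) (𝓝[>] (0:ℝ)) (𝓝 1) ∧
    ∀ᶠ τ in 𝓝[>] (0:ℝ), sInf {z | m * τ / K < F₁ z} - sInf {z | τ / K < F₁ z} ≠ 0 := by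
  have hm0 : 0 < m := by rcases hm with ⟨h, _⟩ | h; exacts [h, one_pos.trans h]
  have hm1 : m ≠ 1 := by rcases hm with ⟨_, h⟩ | h; exacts [h.ne, h.ne']
  have hα : 0 < -1 / ξ := div_pos_of_neg_of_neg (by norm_num) hξ
  have hF₁0 : F₁ 0 = 0 :=
    apply_zero_eq_zero_of_tendsto_div (h₁rc 0) two_pos (Real.one_lt_rpow one_lt_two hα).ne'
      (hreg 2 two_pos)
  have hdivK := tendsto_div_const_nhdsGT_zero hK
  have hmul := tendsto_mul_left_nhdsGT_zero hm0
  have hf := tendsto_genInv_div_genInv_div_const h₁mono h₁rc h₁0 hF₁0 h₁pos h₂mono h₂0 h₂pos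
    hα hK hreg heq
  have hg : Tendsto (fun τ => genInv F₁ (m * τ / K) / genInv F₁ (τ / K)) (𝓝[>] 0)
      (𝓝 (m ^ (-1 / ξ)⁻¹)) :=
    ((tendsto_genInv_mul_div_genInv h₁mono h₁rc h₁0 hF₁0 h₁pos hα hm0 hreg).comp hdivK).congr
      fun τ => by simp only [Function.comp_apply, mul_div_assoc]
  have hgpos : ∀ᶠ τ in 𝓝[>] 0, 0 < genInv F₁ (τ / K) :=
    hdivK.eventually ((tendsto_genInv_nhdsGT_zero h₁mono h₁rc h₁0 hF₁0 h₁pos).eventually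
      self_mem_nhdsWithin)
  have hμ1 : m ^ (-1 / ξ)⁻¹ ≠ 1 := fun h => hm1 <|
    (Real.rpow_left_inj hm0.le zero_le_one (inv_ne_zero hα.ne')).1
      (h.trans (Real.one_rpow _).symm)
  exact hf.sub_div_sub (hf.comp hmul) hg hμ1 (hgpos.mono fun _ h => h.ne')
    ((hmul.eventually hgpos).mono fun _ h => h.ne')

theorem extremal_qr_lem92ii_type3
    (ξ : ℝ) (hξ : ξ < 0)
    (F₁ F₂ : ℝ → ℝ)
    (h₁mono : Monotone F₁) (h₂mono : Monotone F₂)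
    (h₁rc : ∀ z : ℝ, ContinuousWithinAt F₁ (Set.Ici z) z)
    (h₂rc : ∀ z : ℝ, ContinuousWithinAt F₂ (Set.Ici z) z)
    (h₁range : ∀ z : ℝ, F₁ z ∈ Set.Icc (0:ℝ) 1)
    (h₂range : ∀ z : ℝ, F₂ z ∈ Set.Icc (0:ℝ) 1)
    (h₁0 : ∀ z < (0:ℝ), F₁ z = 0) (h₁pos : ∀ z > (0:ℝ), 0 < F₁ z)
    (h₂0 : ∀ z < (0:ℝ), F₂ z = 0) (h₂pos : ∀ z > (0:ℝ), 0 < F₂ z)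
    (hreg : ∀ v > (0:ℝ), Tendsto (fun z => F₁ (v * z) / F₁ z) (𝓝[>] (0:ℝ)) (𝓝 (v ^ (-1/ξ))))
    (K : ℝ) (hK : 0 < K)
    (heq : Tendsto (fun z => F₂ z / F₁ z) (𝓝[>] (0:ℝ)) (𝓝 K))
    (m : ℝ) (hm : m ∈ Set.Ioo (0:ℝ) 1 ∪ Set.Ioi 1)
    :
    Tendsto (fun τ => (sInf {z | m * τ < F₂ z} - sInf {z | τ < F₂ z}) /
        (sInf {z | m * τ / K < F₁ z} - sInf {z | τ / K < F₁ z})) (𝓝[>] (0:ℝ)) (𝓝 1) ∧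
    ∀ᶠ τ in 𝓝[>] (0:ℝ), sInf {z | m * τ / K < F₁ z} - sInf {z | τ / K < F₁ z} ≠ 0 :=
  extremal_qr_lem92ii_type3_general ξ hξ F₁ F₂ h₁mono h₂mono h₁rc h₁0 h₁pos h₂0 h₂pos hreg K hK heq
    m hm
end

section
/- (Knight's identity, equation (9.44)) For every τ ∈ (0,1) and all real numbers u and v: ρ_τ(u − v) − ρ_τ(u) = −v·(τ − 𝟙{u ≤ 0}) + ∫₀^v (𝟙{u ≤ s} − 𝟙{u ≤ 0}) ds, where the integral is the (oriented) interval integral from 0 to v. -/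
open MeasureTheory Filter Topology Real

/-
Since `s ↦ 𝟙{u ≤ s}` is the right derivative of `s ↦ max s u`, the fundamental theorem of calculus
gives `∫₀^v (𝟙{u ≤ s} − 𝟙{u ≤ 0}) ds = max v u − max 0 u − v·𝟙{u ≤ 0}`. Writing the check function
as `ρ_τ(x) = τx − min x 0`, both sides of the identity reduce to the same expression in `max` and `min`.
-/

lemma hasDerivWithinAt_max_const_Ioi (u s : ℝ) :
    HasDerivWithinAt (fun t => max t u) (if u ≤ s then 1 else 0) (Set.Ioi s) s := by
  split_ifs with hus
  · refine (hasDerivWithinAt_id s _).congr_of_eventuallyEq ?_ (max_eq_left hus)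
    filter_upwards [self_mem_nhdsWithin] with t ht
    exact max_eq_left (hus.trans (le_of_lt ht))
  · refine ((hasDerivAt_const s u).congr_of_eventuallyEq ?_).hasDerivWithinAt
    filter_upwards [Iio_mem_nhds (lt_of_not_ge hus)] with t ht
    exact max_eq_right (le_of_lt ht)

lemma sub_ite_mul_eq_mul_sub_min (τ x : ℝ) : (τ - if x ≤ 0 then 1 else 0) * x = τ * x - min x 0 := by
  split_ifs with hx
  · rw [min_eq_left hx]; ring
  · rw [min_eq_right (le_of_not_ge hx)]; ring

lemma integral_ite_le_sub_const (u c v : ℝ) :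
    ∫ s in (0:ℝ)..v, ((if u ≤ s then (1:ℝ) else 0) - c) = max v u - max 0 u - c * v := by
  have hmono : Monotone fun s : ℝ => (if u ≤ s then (1:ℝ) else 0) - c := by
    intro s t hst
    dsimp only
    split_ifs <;> linarith
  rw [intervalIntegral.integral_eq_sub_of_hasDeriv_right (f := fun t => max t u - c * t)
    (by fun_prop) (fun s _ => (hasDerivWithinAt_max_const_Ioi u s).sub
      ((hasDerivWithinAt_id s _).const_mul c |>.congr_deriv (mul_one c)))
    hmono.intervalIntegrable]
  ring

theorem knight_identity_general
    (τ : ℝ) (u v : ℝ)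
    :
    (τ - if u - v ≤ 0 then 1 else 0) * (u - v) - (τ - if u ≤ 0 then 1 else 0) * u =
      -v * (τ - if u ≤ 0 then 1 else 0) +
        ∫ s in (0:ℝ)..v, ((if u ≤ s then (1:ℝ) else 0) - if u ≤ 0 then 1 else 0) := by
  rw [sub_ite_mul_eq_mul_sub_min, sub_ite_mul_eq_mul_sub_min, integral_ite_le_sub_const]
  simp only [min_def, max_def]
  split_ifs <;> linarith

theorem knight_identity
    (τ : ℝ) (hτ : τ ∈ Set.Ioo (0:ℝ) 1) (u v : ℝ)
    :
    (τ - if u - v ≤ 0 then 1 else 0) * (u - v) - (τ - if u ≤ 0 then 1 else 0) * u =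
      -v * (τ - if u ≤ 0 then 1 else 0) +
        ∫ s in (0:ℝ)..v, ((if u ≤ s then (1:ℝ) else 0) - if u ≤ 0 then 1 else 0) :=
  knight_identity_general τ u v
end

section
/- (Quantile-density equivalence, equations (9.52)–(9.57)) Let ξ ∈ ℝ, η ∈ (0,1], and let q : (0,η) → ℝ be strictly increasing and differentiable with q′(τ) > 0 for all τ ∈ (0,η), such that for every compact set L ⊂ (0,∞), sup_{s∈L} |q′(sτ)/q′(τ) − s^{−ξ−1}| → 0 as τ ↘ 0. Fix m > 1 and let v : (0,η) → ℝ satisfy v(τ)/(q(mτ) − q(τ)) → 0 as τ ↘ 0. Then there exist τ₀ ∈ (0,η) and a function ℓ : (0,τ₀) → (0,∞) such that for all τ ∈ (0,τ₀): ℓ(τ)·τ ∈ (0,η) and q(ℓ(τ)·τ) = q(τ) + v(τ); moreover ℓ(τ) → 1 and q′(ℓ(τ)·τ)/q′(τ) → 1 as τ ↘ 0. -/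
/-!
Uniform convergence of `q' (s * τ) / q' τ` on `[1/2, m + 1]` to the positive continuous limit
`s ^ (-ξ - 1)` pins this ratio between two positive constants, so by the mean value theorem every
increment `q (b * τ) - q (a * τ)` with `a < b` in that range has exact order `(b - a) * τ * q' τ`.
Hence `v = o(τ * q' τ)`, and for each `δ` eventually `q τ + v τ` lies strictly between
`q ((1 - δ) * τ)` and `q ((1 + δ) * τ)`; the intermediate value theorem and strict monotonicity
give the solution `l τ * τ` with `|l τ - 1| < δ`. Since `l τ → 1` inside the compact range and
the convergence is uniform there, `q' (l τ * τ) / q' τ → 1 ^ (-ξ - 1) = 1`.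
-/

open MeasureTheory Filter Topology Real

open Set Asymptotics Function

theorem exists_forall_mem_Ioo_of_tendstoUniformlyOn {α β : Type*} [TopologicalSpace β]
    {p : Filter α} {F : α → β → ℝ} {g : β → ℝ} {K : Set β} (hK : IsCompact K)
    (hg : ContinuousOn g K) (hg_pos : ∀ s ∈ K, 0 < g s) (hF : TendstoUniformlyOn F g p K) :
    ∃ c > 0, ∃ C, ∀ᶠ n in p, ∀ s ∈ K, F n s ∈ Ioo c C := by
  obtain ⟨c, hc, hcg⟩ := hK.exists_forall_le' hg hg_pos
  obtain ⟨C, hCg⟩ := hK.bddAbove_image hg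
  refine ⟨c / 2, by positivity, C + c / 2, ?_⟩
  filter_upwards [Metric.tendstoUniformlyOn_iff.1 hF (c / 2) (by positivity)] with n hn s hs
  have hdist := hn s hs
  rw [Real.dist_eq, abs_lt] at hdist
  have hgC : g s ≤ C := hCg (mem_image_of_mem g hs)
  exact ⟨by linarith [hcg s hs], by linarith⟩

theorem sub_mem_Ioo_of_hasDerivAt {f f' : ℝ → ℝ} {a b c C : ℝ} (hab : a < b)
    (hf : ∀ x ∈ Icc a b, HasDerivAt f (f' x) x) (hf' : ∀ x ∈ Ioo a b, f' x ∈ Ioo c C) :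
    f b - f a ∈ Ioo (c * (b - a)) (C * (b - a)) := by
  obtain ⟨z, hz, hslope⟩ := exists_hasDerivAt_eq_slope f f' hab
    (fun x hx => (hf x hx).continuousAt.continuousWithinAt)
    (fun x hx => hf x (Ioo_subset_Icc_self hx))
  rw [eq_div_iff (sub_pos.2 hab).ne'] at hslope
  obtain ⟨hcz, hzC⟩ := hf' z hz
  have hba : 0 < b - a := sub_pos.2 hab
  exact ⟨by nlinarith, by nlinarith⟩

theorem eventually_mul_lt_nhdsGT {η : ℝ} (hη : 0 < η) (b : ℝ) :
    ∀ᶠ τ in 𝓝[>] (0:ℝ), b * τ < η :=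
  ((continuous_const_mul b).tendsto' 0 0 (mul_zero b)).mono_left nhdsWithin_le_nhds
    |>.eventually (gt_mem_nhds hη)

theorem invFunOn_mem_Ioo {f : ℝ → ℝ} {s : Set ℝ} {a b y : ℝ} (hf : StrictMonoOn f s)
    (hcont : ContinuousOn f s) (hab : a ≤ b) (hs : Icc a b ⊆ s) (hy : y ∈ Ioo (f a) (f b)) :
    invFunOn f s y ∈ Ioo a b ∧ f (invFunOn f s y) = y := by
  obtain ⟨x, hx, rfl⟩ := intermediate_value_Ioo hab (hcont.mono hs) hy
  have hxs : x ∈ s := hs (Ioo_subset_Icc_self hx)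
  have hex : ∃ x' ∈ s, f x' = f x := ⟨x, hxs, rfl⟩
  rwa [hf.injOn (invFunOn_mem hex) hxs (invFunOn_eq hex), and_iff_left rfl]

theorem tendsto_of_forall_eventually_mem_Ioo {α : Type*} {l : Filter α} {f : α → ℝ}
    {a δ₀ : ℝ} (hδ₀ : 0 < δ₀) (h : ∀ δ ∈ Ioc 0 δ₀, ∀ᶠ n in l, f n ∈ Ioo (a - δ) (a + δ)) :
    Tendsto f l (𝓝 a) :=
  Metric.tendsto_nhds.2 fun ε hε => (h _ ⟨lt_min hε hδ₀, min_le_right ε δ₀⟩).mono fun n hn => by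
    rw [Real.dist_eq, abs_lt]
    constructor <;> linarith [hn.1, hn.2, min_le_left ε δ₀]

theorem exists_forall_eventually_apply_mul_eq {q y : ℝ → ℝ} {η δ₀ : ℝ} (hη : 0 < η)
    (hcont : ContinuousOn q (Ioo 0 η)) (hmono : StrictMonoOn q (Ioo 0 η)) (hδ₀ : δ₀ < 1)
    (hy : ∀ δ ∈ Ioc 0 δ₀, ∀ᶠ τ in 𝓝[>] 0, y τ ∈ Ioo (q ((1 - δ) * τ)) (q ((1 + δ) * τ))) :
    ∃ l : ℝ → ℝ, ∀ δ ∈ Ioc 0 δ₀, ∀ᶠ τ in 𝓝[>] 0,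
      l τ ∈ Ioo (1 - δ) (1 + δ) ∧ l τ * τ ∈ Ioo 0 η ∧ q (l τ * τ) = y τ := by
  refine ⟨fun τ => invFunOn q (Ioo 0 η) (y τ) / τ, fun δ hδ => ?_⟩
  filter_upwards [hy δ hδ, self_mem_nhdsWithin, eventually_mul_lt_nhdsGT hη (1 + δ)] with
    τ hyτ (hτ : 0 < τ) hτη
  have hδ1 : δ < 1 := hδ.2.trans_lt hδ₀
  have hIcc : Icc ((1 - δ) * τ) ((1 + δ) * τ) ⊆ Ioo 0 η := Icc_subset_Ioo (by nlinarith) hτη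
  obtain ⟨hmem, heq⟩ := invFunOn_mem_Ioo hmono hcont (by nlinarith [hδ.1]) hIcc hyτ
  rw [div_mul_cancel₀ _ hτ.ne', mem_Ioo, lt_div_iff₀ hτ, div_lt_iff₀ hτ]
  exact ⟨hmem, hIcc (Ioo_subset_Icc_self hmem), heq⟩

section

variable {q q' : ℝ → ℝ} {η : ℝ}

theorem scaled_sub_mem_Ioo (hderiv : ∀ x ∈ Ioo 0 η, HasDerivAt q (q' x) x)
    {τ a b c C : ℝ} (hτ : 0 < τ) (hq'τ : 0 < q' τ) (ha : 0 < a) (hab : a < b) (hb : b * τ < η)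
    (hF : ∀ s ∈ Ioo a b, q' (s * τ) / q' τ ∈ Ioo c C) :
    q (b * τ) - q (a * τ) ∈ Ioo (c * (τ * q' τ) * (b - a)) (C * (τ * q' τ) * (b - a)) := by
  refine sub_mem_Ioo_of_hasDerivAt (f := fun s => q (s * τ)) (f' := fun s => q' (s * τ) * τ) hab
    (fun s hs => ?_) (fun s hs => ?_)
  · have hsτ : s * τ ∈ Ioo 0 η := ⟨by nlinarith [hs.1], by nlinarith [hs.2]⟩
    exact (hderiv _ hsτ).comp s (hasDerivAt_mul_const τ)
  · obtain ⟨hc, hC⟩ := hF s hs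
    rw [lt_div_iff₀ hq'τ] at hc
    rw [div_lt_iff₀ hq'τ] at hC
    exact ⟨by nlinarith, by nlinarith⟩

variable (hη : 0 < η) (hderiv : ∀ x ∈ Ioo 0 η, HasDerivAt q (q' x) x)
  (hq'pos : ∀ x ∈ Ioo 0 η, 0 < q' x) {c C a₀ b₀ : ℝ} (hc : 0 < c) (ha₀ : 0 < a₀)
  (hF : ∀ᶠ τ in 𝓝[>] 0, ∀ s ∈ Icc a₀ b₀, q' (s * τ) / q' τ ∈ Ioo c C)
include hη hderiv hq'pos ha₀ hF

theorem eventually_scaled_sub_mem_Ioo :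
    ∀ᶠ τ in 𝓝[>] 0, 0 < τ * q' τ ∧ ∀ a b, a₀ ≤ a → a < b → b ≤ b₀ →
      q (b * τ) - q (a * τ) ∈ Ioo (c * (τ * q' τ) * (b - a)) (C * (τ * q' τ) * (b - a)) := by
  filter_upwards [Ioo_mem_nhdsGT hη, eventually_mul_lt_nhdsGT hη b₀, hF] with τ hτ hb₀τ hFτ
  have hq'τ := hq'pos τ hτ
  refine ⟨mul_pos hτ.1 hq'τ, fun a b ha hab hb => ?_⟩
  exact scaled_sub_mem_Ioo hderiv hτ.1 hq'τ (by linarith) hab (by nlinarith [hτ.1])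
    fun s hs => hFτ s ⟨by linarith [hs.1], by linarith [hs.2]⟩

include hc in
theorem isLittleO_mul_deriv {m : ℝ} {v : ℝ → ℝ} (hm : 1 < m) (h₁ : a₀ ≤ 1) (h₂ : m ≤ b₀)
    (hv : Tendsto (fun τ => v τ / (q (m * τ) - q τ)) (𝓝[>] 0) (𝓝 0)) :
    v =o[𝓝[>] 0] fun τ => τ * q' τ := by
  have hgap : ∀ᶠ τ in 𝓝[>] 0, 0 < c * (τ * q' τ) * (m - 1) ∧
      q (m * τ) - q τ ∈ Ioo (c * (τ * q' τ) * (m - 1)) (C * (τ * q' τ) * (m - 1)) := by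
    filter_upwards [eventually_scaled_sub_mem_Ioo hη hderiv hq'pos ha₀ hF] with τ ⟨hpos, hinc⟩
    have := hinc 1 m h₁ hm h₂
    rw [one_mul] at this
    exact ⟨mul_pos (mul_pos hc hpos) (sub_pos.2 hm), this⟩
  refine ((isLittleO_iff_tendsto' ?_).2 hv).trans_isBigO (IsBigO.of_bound (C * (m - 1)) ?_)
  · filter_upwards [hgap] with τ ⟨hpos, hlo, _⟩ hzero
    linarith
  · filter_upwards [hgap, eventually_scaled_sub_mem_Ioo hη hderiv hq'pos ha₀ hF] with
      τ ⟨hpos, hlo, hhi⟩ ⟨hscale, _⟩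
    rw [Real.norm_eq_abs, Real.norm_eq_abs, abs_of_pos (by linarith), abs_of_pos hscale]
    linarith

include hc in
theorem eventually_mem_Ioo_of_isLittleO {v : ℝ → ℝ} {δ : ℝ} (hδ : 0 < δ) (h₁ : a₀ ≤ 1 - δ)
    (h₂ : 1 + δ ≤ b₀) (hv : v =o[𝓝[>] 0] fun τ => τ * q' τ) :
    ∀ᶠ τ in 𝓝[>] 0, q τ + v τ ∈ Ioo (q ((1 - δ) * τ)) (q ((1 + δ) * τ)) := by
  filter_upwards [eventually_scaled_sub_mem_Ioo hη hderiv hq'pos ha₀ hF, hv.def (mul_pos hc hδ)]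
    with τ ⟨hpos, hinc⟩ hvτ
  have hlo := (hinc (1 - δ) 1 h₁ (by linarith) (by linarith)).1
  have hhi := (hinc 1 (1 + δ) (by linarith) (by linarith) h₂).1
  rw [one_mul] at hlo hhi
  rw [Real.norm_eq_abs, Real.norm_eq_abs, abs_of_pos hpos, abs_le] at hvτ
  constructor <;> linarith [hvτ.1, hvτ.2]

end

theorem quantile_density_equivalence_general
    (ξ η : ℝ) (hη : η ∈ Set.Ioc (0:ℝ) 1)
    (q q' : ℝ → ℝ)
    (hderiv : ∀ τ ∈ Set.Ioo (0:ℝ) η, HasDerivAt q (q' τ) τ)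
    (hq'pos : ∀ τ ∈ Set.Ioo (0:ℝ) η, 0 < q' τ)
    (hreg : ∀ L : Set ℝ, IsCompact L → L ⊆ Set.Ioi 0 →
      ∀ ε > (0:ℝ), ∀ᶠ τ in 𝓝[>] (0:ℝ), ∀ s ∈ L, |q' (s * τ) / q' τ - s ^ (-ξ - 1)| < ε)
    (m : ℝ) (hm : 1 < m)
    (v : ℝ → ℝ)
    (hv : Tendsto (fun τ => v τ / (q (m * τ) - q τ)) (𝓝[>] (0:ℝ)) (𝓝 0))
    :
    ∃ τ₀ ∈ Set.Ioo (0:ℝ) η, ∃ l : ℝ → ℝ,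
      (∀ τ ∈ Set.Ioo (0:ℝ) τ₀, 0 < l τ ∧ l τ * τ ∈ Set.Ioo (0:ℝ) η ∧
        q (l τ * τ) = q τ + v τ) ∧
      Tendsto l (𝓝[>] (0:ℝ)) (𝓝 1) ∧
      Tendsto (fun τ => q' (l τ * τ) / q' τ) (𝓝[>] (0:ℝ)) (𝓝 1) := by
  have hη₀ : 0 < η := hη.1
  have hcont : ContinuousOn q (Ioo 0 η) := fun x hx =>
    (hderiv x hx).continuousAt.continuousWithinAt
  have hmono : StrictMonoOn q (Ioo 0 η) := strictMonoOn_of_hasDerivWithinAt_pos (convex_Ioo 0 η)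
    hcont (by simpa using fun x hx => (hderiv x hx).hasDerivWithinAt) (by simpa using hq'pos)
  set K := Icc (2⁻¹ : ℝ) (m + 1)
  have hKpos : K ⊆ Ioi 0 := fun s hs => lt_of_lt_of_le (by norm_num) hs.1
  have hpow : ContinuousOn (fun s : ℝ => s ^ (-ξ - 1)) K := fun s hs =>
    (continuousAt_rpow_const s _ (Or.inl (hKpos hs).ne')).continuousWithinAt
  have hunif : TendstoUniformlyOn (fun τ s => q' (s * τ) / q' τ) (fun s => s ^ (-ξ - 1))
      (𝓝[>] 0) K := Metric.tendstoUniformlyOn_iff.2 fun ε hε =>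
    (hreg K isCompact_Icc hKpos ε hε).mono fun τ h s hs => by
      rw [dist_comm, Real.dist_eq]; exact h s hs
  obtain ⟨c, hc, C, hF⟩ := exists_forall_mem_Ioo_of_tendstoUniformlyOn isCompact_Icc hpow
    (fun s hs => rpow_pos_of_pos (hKpos hs) _) hunif
  have hvo := isLittleO_mul_deriv hη₀ hderiv hq'pos hc (by norm_num) hF hm (by norm_num)
    (by linarith) hv
  obtain ⟨l, hl⟩ := exists_forall_eventually_apply_mul_eq hη₀ hcont hmono (δ₀ := 2⁻¹) (by norm_num)
    fun δ hδ => eventually_mem_Ioo_of_isLittleO hη₀ hderiv hq'pos hc (by norm_num) hF hδ.1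
      (by linarith [hδ.2]) (by linarith [hδ.2]) hvo
  have hl₁ : Tendsto l (𝓝[>] 0) (𝓝 1) :=
    tendsto_of_forall_eventually_mem_Ioo (by norm_num) fun δ hδ => (hl δ hδ).mono fun _ h => h.1
  have hhalf := hl 2⁻¹ ⟨by norm_num, le_rfl⟩
  obtain ⟨t, ht, hts⟩ := mem_nhdsGT_iff_exists_Ioo_subset.1 hhalf
  refine ⟨min t (η / 2), ⟨lt_min ht (by linarith), (min_le_right _ _).trans_lt (by linarith)⟩, l,
    fun τ hτ => ?_, hl₁, ?_⟩
  · obtain ⟨hlτ, hmem, heq⟩ := hts ⟨hτ.1, hτ.2.trans_le (min_le_left _ _)⟩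
    exact ⟨by linarith [hlτ.1], hmem, heq⟩
  · have hlK : Tendsto l (𝓝[>] 0) (𝓝[K] 1) := tendsto_nhdsWithin_iff.2
      ⟨hl₁, hhalf.mono fun _ h => ⟨by linarith [h.1.1], by linarith [h.1.2]⟩⟩
    simpa using hunif.tendsto_comp (hpow 1 ⟨by norm_num, by linarith⟩) hlK

theorem quantile_density_equivalence
    (ξ η : ℝ) (hη : η ∈ Set.Ioc (0:ℝ) 1)
    (q q' : ℝ → ℝ)
    (hmono : StrictMonoOn q (Set.Ioo (0:ℝ) η))
    (hderiv : ∀ τ ∈ Set.Ioo (0:ℝ) η, HasDerivAt q (q' τ) τ)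
    (hq'pos : ∀ τ ∈ Set.Ioo (0:ℝ) η, 0 < q' τ)
    (hreg : ∀ L : Set ℝ, IsCompact L → L ⊆ Set.Ioi 0 →
      ∀ ε > (0:ℝ), ∀ᶠ τ in 𝓝[>] (0:ℝ), ∀ s ∈ L, |q' (s * τ) / q' τ - s ^ (-ξ - 1)| < ε)
    (m : ℝ) (hm : 1 < m)
    (v : ℝ → ℝ)
    (hv : Tendsto (fun τ => v τ / (q (m * τ) - q τ)) (𝓝[>] (0:ℝ)) (𝓝 0))
    :
    ∃ τ₀ ∈ Set.Ioo (0:ℝ) η, ∃ l : ℝ → ℝ,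
      (∀ τ ∈ Set.Ioo (0:ℝ) τ₀, 0 < l τ ∧ l τ * τ ∈ Set.Ioo (0:ℝ) η ∧
        q (l τ * τ) = q τ + v τ) ∧
      Tendsto l (𝓝[>] (0:ℝ)) (𝓝 1) ∧
      Tendsto (fun τ => q' (l τ * τ) / q' τ) (𝓝[>] (0:ℝ)) (𝓝 1) :=
  quantile_density_equivalence_general ξ η hη q q' hderiv hq'pos hreg m hm v hv
end
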